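/- Let c ≥ 1, let G be a simple graph on a finite vertex set V with |V| = n ≥ 2 and edge set E, let ρ > 0 denote its maximum density, and let η ∈ (0,1). Suppose q ∈ (0,1] satisfies q ≥ 60·c·ln(n)/(ρ·η²). Let F be a q-subsample of E and H = (V, F). Then with probability at least 1 − n^{−c}, every nonempty X ⊆ V simultaneously satisfies |(1/q)·ρ_H(X) − ρ_G(X)| ≤ (η/2)·ρ. -/

import Mathlib

open scoped Classical

/-- Number of edges of `G` with both endpoints in `X`, as a finset of edges. -/
noncomputable def edgesWithin {V : Type*} [Fintype V] [DecidableEq V]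
    (G : SimpleGraph V) [DecidableRel G.Adj] (X : Finset V) : Finset (Sym2 V) :=
  G.edgeFinset.filter (fun e => ∀ v ∈ e, v ∈ X)

/-- The density `ρ_G(X) = e_G(X) / |X|` of the subset `X` in `G`. -/
noncomputable def density {V : Type*} [Fintype V] [DecidableEq V]
    (G : SimpleGraph V) [DecidableRel G.Adj] (X : Finset V) : ℝ :=
  (edgesWithin G X).card / X.card

/-- The maximum density of `G`: the supremum of `ρ_G(X)` over nonempty `X ⊆ V`. -/
noncomputable def maxDensity {V : Type*} [Fintype V] [DecidableEq V]
    (G : SimpleGraph V) [DecidableRel G.Adj] : ℝ :=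
  sSup {r : ℝ | ∃ X : Finset V, X.Nonempty ∧ r = density G X}

/-- The density `ρ_H(X)` of `X` in the graph `H = (V, F)` determined by an
edge set `F`. -/
noncomputable def fdensity {V : Type*} [DecidableEq V]
    (F : Finset (Sym2 V)) (X : Finset V) : ℝ :=
  ((F.filter (fun e => ∀ v ∈ e, v ∈ X)).card : ℝ) / X.card

/-- The probability that a `q`-subsample of `E` (each element of `E` kept
independently with probability `q`) equals the subset `F ⊆ E`. -/
noncomputable def subsampleWeight {β : Type*} [DecidableEq β]
    (E : Finset β) (q : ℝ) (F : Finset β) : ℝ :=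
  q ^ F.card * (1 - q) ^ (E \ F).card

/-- The probability that a `q`-subsample `F` of `E` satisfies the predicate `P`. -/
noncomputable def subsampleProbEvent {β : Type*} [DecidableEq β]
    (E : Finset β) (q : ℝ) (P : Finset β → Prop) : ℝ :=
  ∑ F ∈ E.powerset, if P F then subsampleWeight E q F else 0


open Finset Real

lemma sum_pow_mul_sdiff {β : Type*} [DecidableEq β] (s : Finset β) (x y : ℝ) :
    ∑ F ∈ s.powerset, x ^ F.card * y ^ (s \ F).card = (x + y) ^ s.card := by
  have h := Finset.prod_add (fun _ : β => x) (fun _ : β => y) s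
  simp only [Finset.prod_const] at h
  rw [← h]

lemma subsampleWeight_nonneg {β : Type*} [DecidableEq β] (E : Finset β) {q : ℝ}
    (hq0 : 0 ≤ q) (hq1 : q ≤ 1) (F : Finset β) : 0 ≤ subsampleWeight E q F := by
  unfold subsampleWeight
  exact mul_nonneg (pow_nonneg hq0 _) (pow_nonneg (by linarith) _)

lemma sum_subsampleWeight {β : Type*} [DecidableEq β] (E : Finset β) (q : ℝ) :
    ∑ F ∈ E.powerset, subsampleWeight E q F = 1 := by
  unfold subsampleWeight
  rw [sum_pow_mul_sdiff]; simp


lemma restrict_sum {β : Type*} [DecidableEq β] (E E' : Finset β) (hE' : E' ⊆ E) (q : ℝ)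
    (h : ℕ → ℝ) :
    ∑ F ∈ E.powerset, q ^ F.card * (1 - q) ^ (E \ F).card * h (F ∩ E').card
      = ∑ S ∈ E'.powerset, q ^ S.card * (1 - q) ^ (E' \ S).card * h S.card := by
  have key : ∑ F ∈ E.powerset, q ^ F.card * (1 - q) ^ (E \ F).card * h (F ∩ E').card
      = ∑ p ∈ E'.powerset ×ˢ (E \ E').powerset,
          q ^ (p.1 ∪ p.2).card * (1 - q) ^ (E \ (p.1 ∪ p.2)).card * h ((p.1 ∪ p.2) ∩ E').card := by
    refine Finset.sum_nbij' (fun F => (F ∩ E', F \ E')) (fun p => p.1 ∪ p.2) ?_ ?_ ?_ ?_ ?_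
    · intro F hF
      simp only [Finset.mem_product, Finset.mem_powerset, Finset.mem_powerset] at *
      refine ⟨Finset.inter_subset_right, ?_⟩
      intro a ha
      simp only [Finset.mem_sdiff] at *
      exact ⟨hF ha.1, ha.2⟩
    · intro p hp
      simp only [Finset.mem_product, Finset.mem_powerset] at *
      exact Finset.union_subset (hp.1.trans hE') (hp.2.trans Finset.sdiff_subset)
    · intro F hF
      simp only [Finset.mem_powerset] at hF
      ext a; simp only [Finset.mem_union, Finset.mem_inter, Finset.mem_sdiff]; tauto
    · intro p hp
      simp only [Finset.mem_product, Finset.mem_powerset] at hp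
      have h1 : p.1 ⊆ E' := hp.1
      have h2 : p.2 ⊆ E \ E' := hp.2
      have hp2 : ∀ a ∈ p.2, a ∉ E' := fun a ha => (Finset.mem_sdiff.1 (h2 ha)).2
      ext a
      · simp only [Finset.mem_inter, Finset.mem_union]
        constructor
        · rintro ⟨h3 | h3, h4⟩
          · exact h3
          · exact absurd h4 (hp2 a h3)
        · intro h3; exact ⟨Or.inl h3, h1 h3⟩
      · simp only [Finset.mem_sdiff, Finset.mem_union]
        constructor
        · rintro ⟨h3 | h3, h4⟩
          · exact absurd (h1 h3) h4
          · exact h3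
        · intro h3; exact ⟨Or.inr h3, hp2 a h3⟩
    · intro F hF
      simp only [Finset.mem_powerset] at hF
      have hFe : (F ∩ E') ∪ (F \ E') = F := by
        ext a; simp only [Finset.mem_union, Finset.mem_inter, Finset.mem_sdiff]; tauto
      simp only [hFe]
  rw [key, Finset.sum_product]
  refine Finset.sum_congr rfl fun S hS => ?_
  simp only [Finset.mem_powerset] at hS
  have hST : ∀ T ∈ (E \ E').powerset, Disjoint S T := by
    intro T hT
    simp only [Finset.mem_powerset] at hT
    exact Finset.disjoint_left.2 fun a haS haT =>
      (Finset.mem_sdiff.1 (hT haT)).2 (hS haS)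
  have hsum : ∀ T ∈ (E \ E').powerset,
      q ^ (S ∪ T).card * (1 - q) ^ (E \ (S ∪ T)).card * h ((S ∪ T) ∩ E').card
        = (q ^ S.card * (1 - q) ^ (E' \ S).card * h S.card)
            * (q ^ T.card * (1 - q) ^ ((E \ E') \ T).card) := by
    intro T hT
    simp only [Finset.mem_powerset] at hT
    have hTE' : ∀ a ∈ T, a ∉ E' := fun a ha => (Finset.mem_sdiff.1 (hT ha)).2
    have hcard : (S ∪ T).card = S.card + T.card :=
      Finset.card_union_of_disjoint (hST T (Finset.mem_powerset.2 hT))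
    have hinter : (S ∪ T) ∩ E' = S := by
      ext a; simp only [Finset.mem_inter, Finset.mem_union]
      constructor
      · rintro ⟨h3 | h3, h4⟩
        · exact h3
        · exact absurd h4 (hTE' a h3)
      · intro h3; exact ⟨Or.inl h3, hS h3⟩
    have hsdiff : E \ (S ∪ T) = (E' \ S) ∪ ((E \ E') \ T) := by
      ext a
      simp only [Finset.mem_sdiff, Finset.mem_union]
      constructor
      · rintro ⟨h3, h4⟩
        by_cases h5 : a ∈ E'
        · exact Or.inl ⟨h5, fun h6 => h4 (Or.inl h6)⟩
        · exact Or.inr ⟨⟨h3, h5⟩, fun h6 => h4 (Or.inr h6)⟩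
      · rintro (⟨h3, h4⟩ | ⟨⟨h3, h4⟩, h5⟩)
        · exact ⟨hE' h3, fun h6 => h6.elim (fun h7 => h4 h7) (fun h7 => hTE' a h7 h3)⟩
        · exact ⟨h3, fun h6 => h6.elim (fun h7 => h4 (hS h7)) h5⟩
    have hdisj2 : Disjoint (E' \ S) ((E \ E') \ T) := by
      refine Finset.disjoint_left.2 fun a ha hb => ?_
      exact (Finset.mem_sdiff.1 (Finset.mem_sdiff.1 hb).1).2 (Finset.mem_sdiff.1 ha).1
    have hcard2 : (E \ (S ∪ T)).card = (E' \ S).card + ((E \ E') \ T).card := by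
      rw [hsdiff, Finset.card_union_of_disjoint hdisj2]
    rw [hcard, hinter, hcard2, pow_add, pow_add]
    ring
  rw [Finset.sum_congr rfl hsum, ← Finset.mul_sum, sum_pow_mul_sdiff]
  simp

lemma mgf_sum {β : Type*} [DecidableEq β] (E' : Finset β) (q r : ℝ) :
    ∑ S ∈ E'.powerset, q ^ S.card * (1 - q) ^ (E' \ S).card * r ^ S.card
      = (1 - q + q * r) ^ E'.card := by
  have : ∀ S ∈ E'.powerset, q ^ S.card * (1 - q) ^ (E' \ S).card * r ^ S.card
      = (q * r) ^ S.card * (1 - q) ^ (E' \ S).card := by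
    intro S _; rw [mul_pow]; ring
  rw [Finset.sum_congr rfl this, sum_pow_mul_sdiff]
  ring_nf

/-- Upper tail Chernoff-type bound. -/
lemma tail_upper {β : Type*} [DecidableEq β] (E E' : Finset β) (hE' : E' ⊆ E)
    {q : ℝ} (hq0 : 0 ≤ q) (hq1 : q ≤ 1) (a lam : ℝ) (hlam : 0 ≤ lam) :
    subsampleProbEvent E q (fun F => a < ((F ∩ E').card : ℝ))
      ≤ Real.exp (-(lam * a)) * (1 - q + q * Real.exp lam) ^ E'.card := by
  have hb : ∀ F ∈ E.powerset,
      (if a < ((F ∩ E').card : ℝ) then subsampleWeight E q F else 0)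
        ≤ subsampleWeight E q F * (Real.exp (-(lam * a)) * Real.exp lam ^ (F ∩ E').card) := by
    intro F hF
    have hw : 0 ≤ subsampleWeight E q F := subsampleWeight_nonneg E hq0 hq1 F
    by_cases hc : a < ((F ∩ E').card : ℝ)
    · simp only [hc, if_true]
      have h1 : (1 : ℝ) ≤ Real.exp (-(lam * a)) * Real.exp lam ^ (F ∩ E').card := by
        rw [← Real.exp_nat_mul, ← Real.exp_add]
        rw [← Real.exp_zero]
        apply Real.exp_le_exp.2
        have : a ≤ ((F ∩ E').card : ℝ) := le_of_lt hc
        nlinarith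
      nlinarith
    · simp only [hc, if_false]
      positivity
  calc subsampleProbEvent E q (fun F => a < ((F ∩ E').card : ℝ))
      ≤ ∑ F ∈ E.powerset, subsampleWeight E q F
          * (Real.exp (-(lam * a)) * Real.exp lam ^ (F ∩ E').card) :=
        Finset.sum_le_sum hb
    _ = Real.exp (-(lam * a)) * ∑ F ∈ E.powerset,
          subsampleWeight E q F * Real.exp lam ^ (F ∩ E').card := by
        rw [Finset.mul_sum]; refine Finset.sum_congr rfl fun F _ => by ring
    _ = Real.exp (-(lam * a)) * (1 - q + q * Real.exp lam) ^ E'.card := by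
        rw [← mgf_sum E' q (Real.exp lam), ← restrict_sum E E' hE' q (fun j => Real.exp lam ^ j)]
        rfl

/-- Lower tail Chernoff-type bound. -/
lemma tail_lower {β : Type*} [DecidableEq β] (E E' : Finset β) (hE' : E' ⊆ E)
    {q : ℝ} (hq0 : 0 ≤ q) (hq1 : q ≤ 1) (a lam : ℝ) (hlam : 0 ≤ lam) :
    subsampleProbEvent E q (fun F => ((F ∩ E').card : ℝ) < a)
      ≤ Real.exp (lam * a) * (1 - q + q * Real.exp (-lam)) ^ E'.card := by
  have hb : ∀ F ∈ E.powerset,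
      (if ((F ∩ E').card : ℝ) < a then subsampleWeight E q F else 0)
        ≤ subsampleWeight E q F * (Real.exp (lam * a) * Real.exp (-lam) ^ (F ∩ E').card) := by
    intro F hF
    have hw : 0 ≤ subsampleWeight E q F := subsampleWeight_nonneg E hq0 hq1 F
    by_cases hc : ((F ∩ E').card : ℝ) < a
    · simp only [hc, if_true]
      have h1 : (1 : ℝ) ≤ Real.exp (lam * a) * Real.exp (-lam) ^ (F ∩ E').card := by
        rw [← Real.exp_nat_mul, ← Real.exp_add, ← Real.exp_zero]
        apply Real.exp_le_exp.2
        have : ((F ∩ E').card : ℝ) ≤ a := le_of_lt hc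
        nlinarith
      nlinarith
    · simp only [hc, if_false]
      positivity
  calc subsampleProbEvent E q (fun F => ((F ∩ E').card : ℝ) < a)
      ≤ ∑ F ∈ E.powerset, subsampleWeight E q F
          * (Real.exp (lam * a) * Real.exp (-lam) ^ (F ∩ E').card) :=
        Finset.sum_le_sum hb
    _ = Real.exp (lam * a) * ∑ F ∈ E.powerset,
          subsampleWeight E q F * Real.exp (-lam) ^ (F ∩ E').card := by
        rw [Finset.mul_sum]; refine Finset.sum_congr rfl fun F _ => by ring
    _ = Real.exp (lam * a) * (1 - q + q * Real.exp (-lam)) ^ E'.card := by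
        rw [← mgf_sum E' q (Real.exp (-lam)), ← restrict_sum E E' hE' q (fun j => Real.exp (-lam) ^ j)]
        rfl

lemma probEvent_compl {β : Type*} [DecidableEq β] (E : Finset β) (q : ℝ)
    (P : Finset β → Prop) :
    subsampleProbEvent E q P = 1 - subsampleProbEvent E q (fun F => ¬ P F) := by
  have : subsampleProbEvent E q P + subsampleProbEvent E q (fun F => ¬ P F) = 1 := by
    unfold subsampleProbEvent
    rw [← Finset.sum_add_distrib, ← sum_subsampleWeight E q]
    refine Finset.sum_congr rfl fun F _ => ?_
    by_cases h : P F <;> simp [h]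
  linarith

lemma probEvent_mono {β : Type*} [DecidableEq β] (E : Finset β) {q : ℝ}
    (hq0 : 0 ≤ q) (hq1 : q ≤ 1) {P P' : Finset β → Prop}
    (h : ∀ F ∈ E.powerset, P F → P' F) :
    subsampleProbEvent E q P ≤ subsampleProbEvent E q P' := by
  refine Finset.sum_le_sum fun F hF => ?_
  have hw := subsampleWeight_nonneg E hq0 hq1 F
  by_cases h1 : P F
  · simp [h1, h F hF h1]
  · simp only [h1, if_false]
    by_cases h2 : P' F <;> simp [h2, hw]

lemma probEvent_or_le {β : Type*} [DecidableEq β] (E : Finset β) {q : ℝ}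
    (hq0 : 0 ≤ q) (hq1 : q ≤ 1) (P P' : Finset β → Prop) :
    subsampleProbEvent E q (fun F => P F ∨ P' F)
      ≤ subsampleProbEvent E q P + subsampleProbEvent E q P' := by
  unfold subsampleProbEvent
  rw [← Finset.sum_add_distrib]
  refine Finset.sum_le_sum fun F hF => ?_
  have hw := subsampleWeight_nonneg E hq0 hq1 F
  by_cases h1 : P F <;> by_cases h2 : P' F <;> simp [h1, h2, hw] <;> linarith

lemma probEvent_union_le {β ι : Type*} [DecidableEq β] (E : Finset β) {q : ℝ}
    (hq0 : 0 ≤ q) (hq1 : q ≤ 1) (A : Finset ι) (Q : ι → Finset β → Prop) :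
    subsampleProbEvent E q (fun F => ∃ i ∈ A, Q i F)
      ≤ ∑ i ∈ A, subsampleProbEvent E q (Q i) := by
  unfold subsampleProbEvent
  rw [Finset.sum_comm]
  refine Finset.sum_le_sum fun F hF => ?_
  have hw := subsampleWeight_nonneg E hq0 hq1 F
  by_cases h1 : ∃ i ∈ A, Q i F
  · simp only [h1, if_true]
    obtain ⟨i0, hi0, hQ⟩ := h1
    calc subsampleWeight E q F = (if Q i0 F then subsampleWeight E q F else 0) := by simp [hQ]
      _ ≤ ∑ i ∈ A, if Q i F then subsampleWeight E q F else 0 := by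
          refine Finset.single_le_sum (f := fun i => if Q i F then subsampleWeight E q F else 0)
            (fun i _ => ?_) hi0
          by_cases h : Q i F <;> simp [h, hw]
  · simp only [h1, if_false]
    exact Finset.sum_nonneg fun i _ => by positivity

lemma exp_quad_upper {x : ℝ} (h0 : 0 ≤ x) (h1 : x ≤ 1) :
    Real.exp x ≤ 1 + x + x ^ 2 := by
  have h := Real.exp_bound (by rw [abs_of_nonneg h0]; exact h1) (n := 2) (by norm_num)
  rw [abs_of_nonneg h0] at h
  have h2 : ∑ m ∈ Finset.range 2, x ^ m / m.factorial = 1 + x := by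
    simp [Finset.sum_range_succ]
  rw [h2] at h
  have h3 : Real.exp x - (1 + x) ≤ x ^ 2 * ((2 + 1) / (2 * 2)) := by
    have := abs_le.1 h
    convert this.2 using 2 <;> norm_num <;> rfl
  nlinarith [sq_nonneg x]

lemma exp_quad_lower {x : ℝ} (h0 : 0 ≤ x) (h1 : x ≤ 1) :
    Real.exp (-x) ≤ 1 - x + x ^ 2 := by
  have h := Real.exp_bound (x := -x) (by rw [abs_neg, abs_of_nonneg h0]; exact h1)
    (n := 2) (by norm_num)
  rw [abs_neg, abs_of_nonneg h0] at h
  have h2 : ∑ m ∈ Finset.range 2, (-x) ^ m / m.factorial = 1 - x := by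
    simp [Finset.sum_range_succ]
    ring
  rw [h2] at h
  have h3 : Real.exp (-x) - (1 - x) ≤ x ^ 2 * ((2 + 1) / (2 * 2)) := by
    have := abs_le.1 h
    convert this.2 using 2 <;> norm_num <;> rfl
  nlinarith [sq_nonneg x]
lemma geom_tail {r : ℝ} (h0 : 0 ≤ r) (h1 : r < 1) (n : ℕ) :
    ∑ j ∈ Finset.range n, r ^ j ≤ (1 - r)⁻¹ := by
  have hm := geom_sum_mul r n
  have h3 : (0:ℝ) ≤ r ^ n := pow_nonneg h0 n
  have h4 : (0:ℝ) < 1 - r := by linarith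
  have key : (∑ j ∈ Finset.range n, r ^ j) * (1 - r) ≤ 1 := by nlinarith
  calc ∑ j ∈ Finset.range n, r ^ j
      = (∑ j ∈ Finset.range n, r ^ j) * (1 - r) * (1 - r)⁻¹ := by
        field_simp
    _ ≤ 1 * (1 - r)⁻¹ := by
        apply mul_le_mul_of_nonneg_right key (by positivity)
    _ = (1 - r)⁻¹ := one_mul _

/-- Two-sided Chernoff bound for the number of sampled elements of `E'`. -/
lemma two_sided_bound {β : Type*} [DecidableEq β] (E E' : Finset β) (hE' : E' ⊆ E)
    {q η M : ℝ} (hq0 : 0 < q) (hq1 : q ≤ 1) (hη0 : 0 < η) (hη1 : η < 1)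
    (hM : q * E'.card ≤ M) :
    subsampleProbEvent E q (fun F =>
        q * E'.card + (η / 2) * M < ((F ∩ E').card : ℝ)
          ∨ ((F ∩ E').card : ℝ) < q * E'.card - (η / 2) * M)
      ≤ 2 * Real.exp (-(η ^ 2 * M / 16)) := by
  have hm0 : (0:ℝ) ≤ (E'.card : ℝ) := Nat.cast_nonneg _
  have hM0 : 0 ≤ M := le_trans (by positivity) hM
  have hl0 : (0:ℝ) ≤ η / 4 := by positivity
  have hl1 : η / 4 ≤ 1 := by linarith
  have hDu0 : 1 + η / 4 ≤ Real.exp (η / 4) := by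
    have := Real.add_one_le_exp (η / 4); linarith
  have hDu1 : Real.exp (η / 4) ≤ 1 + η / 4 + (η / 4) ^ 2 := exp_quad_upper hl0 hl1
  have hDl0 : 1 - η / 4 ≤ Real.exp (-(η / 4)) := by
    have := Real.add_one_le_exp (-(η / 4)); linarith
  have hDl1 : Real.exp (-(η / 4)) ≤ 1 - η / 4 + (η / 4) ^ 2 := exp_quad_lower hl0 hl1
  have step := probEvent_or_le E (le_of_lt hq0) hq1
    (fun F => q * E'.card + (η / 2) * M < ((F ∩ E').card : ℝ))
    (fun F => ((F ∩ E').card : ℝ) < q * E'.card - (η / 2) * M)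
  refine le_trans step ?_
  have hbase_u : (0:ℝ) ≤ 1 - q + q * Real.exp (η / 4) := by
    nlinarith [Real.exp_pos (η / 4)]
  have hbase_l : (0:ℝ) ≤ 1 - q + q * Real.exp (-(η / 4)) := by
    nlinarith [Real.exp_pos (-(η / 4))]
  have hup : subsampleProbEvent E q
      (fun F => q * E'.card + (η / 2) * M < ((F ∩ E').card : ℝ))
        ≤ Real.exp (-(η ^ 2 * M / 16)) := by
    refine le_trans (tail_upper E E' hE' (le_of_lt hq0) hq1 _ (η / 4) hl0) ?_
    have h1 : 1 - q + q * Real.exp (η / 4) ≤ Real.exp (q * (Real.exp (η / 4) - 1)) := by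
      have := Real.add_one_le_exp (q * (Real.exp (η / 4) - 1)); linarith
    have h2 : (1 - q + q * Real.exp (η / 4)) ^ E'.card
        ≤ Real.exp (q * (Real.exp (η / 4) - 1)) ^ E'.card :=
      pow_le_pow_left₀ hbase_u h1 _
    have h3 : Real.exp (q * (Real.exp (η / 4) - 1)) ^ E'.card
        = Real.exp ((E'.card : ℝ) * (q * (Real.exp (η / 4) - 1))) := by
      rw [← Real.exp_nat_mul]
    calc Real.exp (-(η / 4 * (q * E'.card + (η / 2) * M)))
          * (1 - q + q * Real.exp (η / 4)) ^ E'.card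
        ≤ Real.exp (-(η / 4 * (q * E'.card + (η / 2) * M)))
            * Real.exp ((E'.card : ℝ) * (q * (Real.exp (η / 4) - 1))) := by
          rw [← h3]
          exact mul_le_mul_of_nonneg_left h2 (le_of_lt (Real.exp_pos _))
      _ = Real.exp (-(η / 4 * (q * E'.card + (η / 2) * M))
            + (E'.card : ℝ) * (q * (Real.exp (η / 4) - 1))) := by
          rw [← Real.exp_add]
      _ ≤ Real.exp (-(η ^ 2 * M / 16)) := by
          apply Real.exp_le_exp.2
          have hD0 : 0 ≤ Real.exp (η / 4) - 1 - η / 4 := by linarith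
          have hD1 : Real.exp (η / 4) - 1 - η / 4 ≤ (η / 4) ^ 2 := by linarith
          have ha : q * (E'.card : ℝ) * (Real.exp (η / 4) - 1 - η / 4)
              ≤ M * (Real.exp (η / 4) - 1 - η / 4) :=
            mul_le_mul_of_nonneg_right hM hD0
          have hb : M * (Real.exp (η / 4) - 1 - η / 4) ≤ M * (η / 4) ^ 2 :=
            mul_le_mul_of_nonneg_left hD1 hM0
          nlinarith [ha, hb]
  have hlo : subsampleProbEvent E q
      (fun F => ((F ∩ E').card : ℝ) < q * E'.card - (η / 2) * M)
        ≤ Real.exp (-(η ^ 2 * M / 16)) := by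
    refine le_trans (tail_lower E E' hE' (le_of_lt hq0) hq1 _ (η / 4) hl0) ?_
    have h1 : 1 - q + q * Real.exp (-(η / 4)) ≤ Real.exp (q * (Real.exp (-(η / 4)) - 1)) := by
      have := Real.add_one_le_exp (q * (Real.exp (-(η / 4)) - 1)); linarith
    have h2 : (1 - q + q * Real.exp (-(η / 4))) ^ E'.card
        ≤ Real.exp (q * (Real.exp (-(η / 4)) - 1)) ^ E'.card :=
      pow_le_pow_left₀ hbase_l h1 _
    have h3 : Real.exp (q * (Real.exp (-(η / 4)) - 1)) ^ E'.card
        = Real.exp ((E'.card : ℝ) * (q * (Real.exp (-(η / 4)) - 1))) := by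
      rw [← Real.exp_nat_mul]
    calc Real.exp (η / 4 * (q * E'.card - (η / 2) * M))
          * (1 - q + q * Real.exp (-(η / 4))) ^ E'.card
        ≤ Real.exp (η / 4 * (q * E'.card - (η / 2) * M))
            * Real.exp ((E'.card : ℝ) * (q * (Real.exp (-(η / 4)) - 1))) := by
          rw [← h3]
          exact mul_le_mul_of_nonneg_left h2 (le_of_lt (Real.exp_pos _))
      _ = Real.exp (η / 4 * (q * E'.card - (η / 2) * M)
            + (E'.card : ℝ) * (q * (Real.exp (-(η / 4)) - 1))) := by
          rw [← Real.exp_add]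
      _ ≤ Real.exp (-(η ^ 2 * M / 16)) := by
          apply Real.exp_le_exp.2
          have hD0 : 0 ≤ η / 4 + Real.exp (-(η / 4)) - 1 := by linarith
          have hD1 : η / 4 + Real.exp (-(η / 4)) - 1 ≤ (η / 4) ^ 2 := by linarith
          have ha : q * (E'.card : ℝ) * (η / 4 + Real.exp (-(η / 4)) - 1)
              ≤ M * (η / 4 + Real.exp (-(η / 4)) - 1) :=
            mul_le_mul_of_nonneg_right hM hD0
          have hb : M * (η / 4 + Real.exp (-(η / 4)) - 1) ≤ M * (η / 4) ^ 2 :=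
            mul_le_mul_of_nonneg_left hD1 hM0
          nlinarith [ha, hb]
  linarith

lemma density_le_maxDensity {V : Type*} [Fintype V] [DecidableEq V]
    (G : SimpleGraph V) [DecidableRel G.Adj] (X : Finset V) (hX : X.Nonempty) :
    density G X ≤ maxDensity G := by
  have hfin : ({r : ℝ | ∃ X : Finset V, X.Nonempty ∧ r = density G X}).Finite := by
    have : {r : ℝ | ∃ X : Finset V, X.Nonempty ∧ r = density G X}
        ⊆ Set.range (density G) := by
      rintro r ⟨Y, _, rfl⟩; exact ⟨Y, rfl⟩
    exact (Set.finite_range (density G)).subset this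
  exact le_csSup hfin.bddAbove ⟨X, hX, rfl⟩

lemma filter_eq_inter {V : Type*} [Fintype V] [DecidableEq V]
    (G : SimpleGraph V) [DecidableRel G.Adj] (X : Finset V) (F : Finset (Sym2 V))
    (hF : F ⊆ G.edgeFinset) :
    F.filter (fun e => ∀ v ∈ e, v ∈ X) = F ∩ edgesWithin G X := by
  unfold edgesWithin
  ext e
  simp only [Finset.mem_filter, Finset.mem_inter]
  exact ⟨fun ⟨h1, h2⟩ => ⟨h1, hF h1, h2⟩, fun ⟨h1, _, h3⟩ => ⟨h1, h3⟩⟩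

set_option maxHeartbeats 2000000 in
/-- Uniform subsampling preserves all densities
([McGregor et al., EHW16]): if `q ≥ 60 c ln(n) / (ρ η²)`, then with probability
at least `1 - n^{-c}` over the `q`-subsample `F` of the edges of `G`,
every nonempty `X ⊆ V` simultaneously satisfies
`|(1/q) ρ_H(X) - ρ_G(X)| ≤ (η/2) ρ`, where `H = (V, F)` and `ρ` is the maximum
density of `G`. -/
theorem stmt3 {V : Type*} [Fintype V] [DecidableEq V]
    (c : ℝ) (hc : 1 ≤ c)
    (G : SimpleGraph V) [DecidableRel G.Adj]
    (hn : 2 ≤ Fintype.card V)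
    (hρ : 0 < maxDensity G)
    (η q : ℝ) (hη : η ∈ Set.Ioo (0 : ℝ) 1) (hq : q ∈ Set.Ioc (0 : ℝ) 1)
    (hqlb : 60 * c * Real.log (Fintype.card V) / (maxDensity G * η ^ 2) ≤ q) :
    1 - (Fintype.card V : ℝ) ^ (-c) ≤
      subsampleProbEvent G.edgeFinset q
        (fun F => ∀ X : Finset V, X.Nonempty →
          |(1 / q) * fdensity F X - density G X| ≤ (η / 2) * maxDensity G) := by
  obtain ⟨hη0, hη1⟩ := hη
  obtain ⟨hq0, hq1⟩ := hq
  set n : ℕ := Fintype.card V with hn'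
  set L : ℝ := Real.log n with hL'
  set ρ : ℝ := maxDensity G with hρ'
  set E : Finset (Sym2 V) := G.edgeFinset with hE'
  have hn0 : (0:ℝ) < n := by
    have : (2:ℝ) ≤ n := by exact_mod_cast hn
    linarith
  have hlog2 : (0.6931:ℝ) < Real.log 2 := by
    have := Real.log_two_gt_d9; linarith
  have hL2 : Real.log 2 ≤ L := by
    rw [hL']
    exact Real.log_le_log (by norm_num) (by exact_mod_cast hn)
  have hL0 : (0:ℝ) < L := by linarith
  have h60 : 60 * c * L ≤ q * (ρ * η ^ 2) := by
    rw [div_le_iff₀ (by positivity)] at hqlb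
    linarith [hqlb]
  have hc0 : (0:ℝ) < c := by linarith
  -- the family of "bad" events
  let 𝒳 : Finset (Finset V) := Finset.univ.powerset.filter (fun X : Finset V => X.Nonempty)
  let bad : Finset V → Finset (Sym2 V) → Prop := fun X F =>
    q * ((edgesWithin G X).card : ℝ)
        + (η / 2) * (q * (ρ * X.card)) < ((F ∩ edgesWithin G X).card : ℝ)
      ∨ ((F ∩ edgesWithin G X).card : ℝ)
        < q * ((edgesWithin G X).card : ℝ) - (η / 2) * (q * (ρ * X.card))
  -- implication: if no bad event happens then all densities are preserved
  have himp : ∀ F ∈ E.powerset, (∀ X ∈ 𝒳, ¬ bad X F) →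
      (∀ X : Finset V, X.Nonempty →
        |(1 / q) * fdensity F X - density G X| ≤ (η / 2) * ρ) := by
    intro F hF hgood X hX
    have hXmem : X ∈ 𝒳 := by
      simp only [𝒳, Finset.mem_filter, Finset.mem_powerset]
      exact ⟨Finset.subset_univ X, hX⟩
    have hb := hgood X hXmem
    simp only [bad, not_or, not_lt] at hb
    obtain ⟨hb1, hb2⟩ := hb
    have hFE : F ⊆ G.edgeFinset := Finset.mem_powerset.1 hF
    have hfe : fdensity F X = ((F ∩ edgesWithin G X).card : ℝ) / X.card := by
      have hfil : Finset.filter (fun e => ∀ v ∈ e, v ∈ X) F = F ∩ edgesWithin G X := by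
        ext e
        unfold edgesWithin
        simp only [Finset.mem_filter, Finset.mem_inter]
        exact ⟨fun ⟨h1, h2⟩ => ⟨h1, hFE h1, h2⟩, fun ⟨h1, _, h3⟩ => ⟨h1, h3⟩⟩
      unfold fdensity
      rw [Finset.filter_congr_decidable, hfil]
    have hk1 : (1:ℝ) ≤ (X.card : ℝ) := by
      have := Finset.card_pos.2 hX
      exact_mod_cast this
    have hk0 : (0:ℝ) < (X.card : ℝ) := by linarith
    set j : ℝ := ((F ∩ edgesWithin G X).card : ℝ)
    set m : ℝ := ((edgesWithin G X).card : ℝ)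
    have hde : density G X = m / X.card := rfl
    rw [hfe, hde]
    have heq : (1 / q) * (j / X.card) - m / X.card = (j - q * m) / (q * X.card) := by
      field_simp
    rw [heq, abs_div, abs_of_pos (by positivity : (0:ℝ) < q * X.card),
      div_le_iff₀ (by positivity : (0:ℝ) < q * X.card)]
    rw [abs_le]
    constructor <;> nlinarith [hb1, hb2]
  -- per-X probability bound
  have hperX : ∀ X ∈ 𝒳, subsampleProbEvent E q (bad X)
      ≤ 2 * Real.exp (-(3.75 * c * L * X.card)) := by
    intro X hXmem
    have hX : X.Nonempty := (Finset.mem_filter.1 hXmem).2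
    have hk1 : (1:ℝ) ≤ (X.card : ℝ) := by
      have := Finset.card_pos.2 hX
      exact_mod_cast this
    have hk0 : (0:ℝ) < (X.card : ℝ) := by linarith
    have hsub : edgesWithin G X ⊆ E := Finset.filter_subset _ _
    have hdens : ((edgesWithin G X).card : ℝ) / X.card ≤ ρ :=
      density_le_maxDensity G X hX
    have hm : ((edgesWithin G X).card : ℝ) ≤ ρ * X.card := by
      rw [div_le_iff₀ hk0] at hdens
      linarith
    have hM : q * ((edgesWithin G X).card : ℝ) ≤ q * (ρ * X.card) :=
      mul_le_mul_of_nonneg_left hm (le_of_lt hq0)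
    refine le_trans (two_sided_bound E (edgesWithin G X) hsub hq0 hq1 hη0 hη1 hM) ?_
    have hexp : -(η ^ 2 * (q * (ρ * X.card)) / 16) ≤ -(3.75 * c * L * X.card) := by
      have := mul_le_mul_of_nonneg_right h60 (by positivity : (0:ℝ) ≤ (X.card : ℝ) / 16)
      nlinarith [this]
    have := Real.exp_le_exp.2 hexp
    linarith
  -- union bound and counting
  have hcount : ∑ X ∈ 𝒳, (2 : ℝ) * Real.exp (-(3.75 * c * L * X.card))
      ≤ (n : ℝ) ^ (-c) := by
    have hw : ((n : ℝ)) ^ (-c) = Real.exp (-(c * L)) := by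
      rw [Real.rpow_def_of_pos hn0]
      congr 1
      rw [hL']
      ring
    set r : ℝ := Real.exp (-(2.75 * c * L)) with hr'
    have hr0 : (0:ℝ) < r := Real.exp_pos _
    have hecL0 : (0:ℝ) < Real.exp (-(c * L)) := Real.exp_pos _
    have hecL : Real.exp (-(c * L)) ≤ 1 / 2 := by
      have h1 : -(c * L) ≤ -(Real.log 2) := by nlinarith
      calc Real.exp (-(c * L)) ≤ Real.exp (-(Real.log 2)) := Real.exp_le_exp.2 h1
        _ = 1 / 2 := by
          rw [Real.exp_neg, Real.exp_log (by norm_num : (0:ℝ) < 2)]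
          norm_num
    have h175 : Real.exp (-(1.75 * c * L)) ≤ 1 / 3 := by
      have hsplit : Real.exp (1.75 * c * L)
          = Real.exp (c * L) * Real.exp (0.75 * c * L) := by
        rw [← Real.exp_add]; congr 1; ring
      have hinv : Real.exp (c * L) * Real.exp (-(c * L)) = 1 := by
        rw [← Real.exp_add]; simp
      have h2 : (2:ℝ) ≤ Real.exp (c * L) := by nlinarith
      have hcL : Real.log 2 ≤ c * L := by nlinarith
      have h3 : (1.5:ℝ) ≤ Real.exp (0.75 * c * L) := by
        have := Real.add_one_le_exp (0.75 * c * L)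
        nlinarith
      have h4 : (3:ℝ) ≤ Real.exp (1.75 * c * L) := by rw [hsplit]; nlinarith
      have h5 : Real.exp (1.75 * c * L) * Real.exp (-(1.75 * c * L)) = 1 := by
        rw [← Real.exp_add]; simp
      nlinarith [Real.exp_pos (-(1.75 * c * L))]
    have hr3 : r ≤ Real.exp (-(c * L)) * (1 / 3) := by
      have hdec : r = Real.exp (-(c * L)) * Real.exp (-(1.75 * c * L)) := by
        rw [hr', ← Real.exp_add]; congr 1; ring
      rw [hdec]
      exact mul_le_mul_of_nonneg_left h175 (le_of_lt hecL0)
    have hr6 : r ≤ 1 / 6 := by nlinarith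
    have hr1 : r < 1 := by linarith
    -- replace the summand by one vanishing on the empty set
    have step1 : ∑ X ∈ 𝒳, (2 : ℝ) * Real.exp (-(3.75 * c * L * X.card))
        ≤ ∑ X ∈ (Finset.univ : Finset V).powerset,
            (if X.card = 0 then 0 else (2 : ℝ) * Real.exp (-(3.75 * c * L * X.card))) := by
      have he : ∑ X ∈ 𝒳, (2 : ℝ) * Real.exp (-(3.75 * c * L * X.card))
          = ∑ X ∈ 𝒳,
              (if X.card = 0 then 0 else (2 : ℝ) * Real.exp (-(3.75 * c * L * X.card))) := by
        refine Finset.sum_congr rfl fun X hX => ?_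
        have hXne : X.Nonempty := (Finset.mem_filter.1 hX).2
        have : X.card ≠ 0 := Finset.card_ne_zero.2 hXne
        simp [this]
      rw [he]
      refine Finset.sum_le_sum_of_subset_of_nonneg (Finset.filter_subset _ _) ?_
      intro X _ _
      by_cases h : X.card = 0
      · simp [h]
      · simp only [h, if_false]
        positivity
    refine le_trans step1 ?_
    rw [Finset.sum_powerset]
    have step2 : ∀ j ∈ Finset.range ((Finset.univ : Finset V).card + 1),
        ∑ X ∈ Finset.powersetCard j (Finset.univ : Finset V),
            (if X.card = 0 then 0 else (2 : ℝ) * Real.exp (-(3.75 * c * L * X.card)))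
          = (n.choose j : ℝ)
              * (if j = 0 then 0 else (2 : ℝ) * Real.exp (-(3.75 * c * L * j))) := by
      intro j _
      have hcongr : ∀ X ∈ Finset.powersetCard j (Finset.univ : Finset V),
          (if X.card = 0 then 0 else (2 : ℝ) * Real.exp (-(3.75 * c * L * X.card)))
            = (if j = 0 then 0 else (2 : ℝ) * Real.exp (-(3.75 * c * L * j))) := by
        intro X hX
        have : X.card = j := (Finset.mem_powersetCard.1 hX).2
        rw [this]
      rw [Finset.sum_congr rfl hcongr, Finset.sum_const, Finset.card_powersetCard,
        Finset.card_univ, nsmul_eq_mul]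
    rw [Finset.sum_congr rfl step2, Finset.card_univ]
    rw [show Fintype.card V = n from rfl]
    rw [Finset.sum_range_succ']
    simp only [Nat.add_eq_zero, Nat.succ_ne_zero, and_false, if_false, if_true,
      Nat.choose_zero_right, eq_self_iff_true, mul_zero, add_zero, one_ne_zero]
    have step3 : ∀ j ∈ Finset.range n,
        (n.choose (j + 1) : ℝ) * ((2 : ℝ) * Real.exp (-(3.75 * c * L * ((j + 1 : ℕ) : ℝ))))
          ≤ 2 * r ^ (j + 1) := by
      intro j _
      have hch : (n.choose (j + 1) : ℝ) ≤ (n : ℝ) ^ (j + 1) := by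
        exact_mod_cast Nat.choose_le_pow n (j + 1)
      have hne : (n : ℝ) = Real.exp L := by
        rw [hL', Real.exp_log hn0]
      have he1 : Real.exp (-(3.75 * c * L * ((j + 1 : ℕ) : ℝ)))
          = (Real.exp (-(3.75 * c * L))) ^ (j + 1) := by
        rw [← Real.exp_nat_mul]
        congr 1
        push_cast
        ring
      have hbound : (n : ℝ) ^ (j + 1) * Real.exp (-(3.75 * c * L * ((j + 1 : ℕ) : ℝ)))
          ≤ r ^ (j + 1) := by
        rw [he1, hne, ← mul_pow]
        refine pow_le_pow_left₀ (by positivity) ?_ _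
        rw [← Real.exp_add]
        apply Real.exp_le_exp.2
        nlinarith
      have hexp0 : (0:ℝ) ≤ Real.exp (-(3.75 * c * L * ((j + 1 : ℕ) : ℝ))) :=
        le_of_lt (Real.exp_pos _)
      nlinarith [mul_le_mul_of_nonneg_right hch hexp0]
    refine le_trans (Finset.sum_le_sum step3) ?_
    have hgeom : ∑ j ∈ Finset.range n, (2:ℝ) * r ^ (j + 1)
        = 2 * r * ∑ j ∈ Finset.range n, r ^ j := by
      rw [Finset.mul_sum]
      refine Finset.sum_congr rfl fun j _ => ?_
      rw [pow_succ]
      ring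
    rw [hgeom, hw]
    have hg := geom_tail (le_of_lt hr0) hr1 n
    have hinv : (1 - r)⁻¹ ≤ 6 / 5 := by
      rw [show (6:ℝ)/5 = (5/6 : ℝ)⁻¹ by norm_num]
      apply inv_anti₀ (by norm_num)
      linarith
    have hsum0 : (0:ℝ) ≤ ∑ j ∈ Finset.range n, r ^ j :=
      Finset.sum_nonneg fun j _ => pow_nonneg (le_of_lt hr0) j
    have : 2 * r * ∑ j ∈ Finset.range n, r ^ j ≤ 2 * r * (6 / 5) := by
      have := le_trans hg hinv
      nlinarith
    nlinarith
  have hPbad : subsampleProbEvent E q (fun F => ¬ ∀ X ∈ 𝒳, ¬ bad X F) ≤ (n : ℝ) ^ (-c) := by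
    have h1 : subsampleProbEvent E q (fun F => ¬ ∀ X ∈ 𝒳, ¬ bad X F)
        ≤ subsampleProbEvent E q (fun F => ∃ X ∈ 𝒳, bad X F) := by
      refine probEvent_mono E (le_of_lt hq0) hq1 fun F _ h => ?_
      push_neg at h
      exact h
    refine le_trans h1 (le_trans (probEvent_union_le E (le_of_lt hq0) hq1 𝒳 bad) ?_)
    exact le_trans (Finset.sum_le_sum hperX) hcount
  have hmono := probEvent_mono E (le_of_lt hq0) hq1 himp
  rw [probEvent_compl E q (fun F => ∀ X ∈ 𝒳, ¬ bad X F)] at hmono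
  linarith
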